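/- arXiv:2011.12726 — 3 statements merged into one kernel-verified Lean document; each statement's English description precedes it below -/
import Mathlib

section
/- Let G be the discrete-time LTI system with matrices (A, B, C, D), let γ̃ > 0, and let P ∈ ℝ^{n×n} and Q ∈ ℝ^{n_w×n_w} be symmetric matrices such that L(A, B, C, D, P, Q, γ̃) is negative semidefinite. Then for every input w : ℕ → ℝ^{n_w}, the state x and output z of G satisfy, for every N ∈ ℕ: x(N+1)ᵀ P x(N+1) − γ̃² Σ_{k=0}^{N} |w(k)|_2² + Σ_{k=0}^{N} w(k)ᵀ Q w(k) + Σ_{k=0}^{N} |z(k)|_2² ≤ 0. -/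
open Matrix

noncomputable section

/-- A symmetric matrix is copositive if its quadratic form is nonnegative on the
nonnegative orthant. -/
def Copositive {q : Type*} [Fintype q] (Q : Matrix q q ℝ) : Prop :=
  Q.IsSymm ∧ ∀ x : q → ℝ, (∀ i, 0 ≤ x i) → 0 ≤ x ⬝ᵥ Q.mulVec x

/-- The matrix L(A,B,C,D,P,Q,γ). -/
def Lmat {n w z : Type*} [Fintype n] [Fintype w] [Fintype z]
    [DecidableEq n] [DecidableEq w] [DecidableEq z]
    (A : Matrix n n ℝ) (B : Matrix n w ℝ) (C : Matrix z n ℝ) (D : Matrix z w ℝ)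
    (P : Matrix n n ℝ) (Q : Matrix w w ℝ) (γ : ℝ) : Matrix (n ⊕ w) (n ⊕ w) ℝ :=
  Matrix.fromBlocks (-P) 0 0 ((-(γ ^ 2)) • (1 : Matrix w w ℝ) + Q)
    + (Matrix.fromBlocks A B C D)ᵀ * Matrix.fromBlocks P 0 0 (1 : Matrix z z ℝ)
      * Matrix.fromBlocks A B C D

/-- State of the LTI system x(k+1) = A x(k) + B w(k), x(0) = 0. -/
def ltiState {n w : Type*} [Fintype n] [Fintype w]
    (A : Matrix n n ℝ) (B : Matrix n w ℝ) (ws : ℕ → w → ℝ) : ℕ → n → ℝ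
  | 0 => 0
  | k + 1 => A.mulVec (ltiState A B ws k) + B.mulVec (ws k)

/-- Output z(k) = C x(k) + D w(k). -/
def ltiOutput {n w z : Type*} [Fintype n] [Fintype w] [Fintype z]
    (A : Matrix n n ℝ) (B : Matrix n w ℝ) (C : Matrix z n ℝ) (D : Matrix z w ℝ)
    (ws : ℕ → w → ℝ) (k : ℕ) : z → ℝ :=
  C.mulVec (ltiState A B ws k) + D.mulVec (ws k)

/-- l2 norm of a discrete-time signal. -/
def sigNorm {w : Type*} [Fintype w] (u : ℕ → w → ℝ) : ℝ :=
  Real.sqrt (∑' k, ∑ i, (u k i) ^ 2)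

/-- Euclidean norm of a vector. -/
def vecNorm {ι : Type*} [Fintype ι] (v : ι → ℝ) : ℝ :=
  Real.sqrt (∑ i, (v i) ^ 2)

/-- The positive l2 induced norm of the system (A,B,C,D). -/
def posL2Gain {n w z : Type*} [Fintype n] [Fintype w] [Fintype z]
    (A : Matrix n n ℝ) (B : Matrix n w ℝ) (C : Matrix z n ℝ) (D : Matrix z w ℝ) : ℝ :=
  sSup {c : ℝ | ∃ ws : ℕ → w → ℝ, (∀ k i, 0 ≤ ws k i) ∧
    Summable (fun k => ∑ i, (ws k i) ^ 2) ∧ sigNorm ws = 1 ∧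
    c = sigNorm (ltiOutput A B C D ws)}

/-- The l2 induced norm of the system (A,B,C,D). -/
def l2Gain {n w z : Type*} [Fintype n] [Fintype w] [Fintype z]
    (A : Matrix n n ℝ) (B : Matrix n w ℝ) (C : Matrix z n ℝ) (D : Matrix z w ℝ) : ℝ :=
  sSup {c : ℝ | ∃ ws : ℕ → w → ℝ,
    Summable (fun k => ∑ i, (ws k i) ^ 2) ∧ sigNorm ws = 1 ∧
    c = sigNorm (ltiOutput A B C D ws)}

/-- Schur–Cohn stability: the spectral radius (over ℂ) is < 1. -/
def SchurStable {n : Type*} [Fintype n] [DecidableEq n] (A : Matrix n n ℝ) : Prop :=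
  spectralRadius ℂ (A.map (algebraMap ℝ ℂ)) < 1

/-- Lifted A matrix. -/
def liftA {n : Type*} [Fintype n] [DecidableEq n] (A : Matrix n n ℝ) (N : ℕ) :
    Matrix n n ℝ := A ^ N

/-- Lifted B matrix. -/
def liftB {n w : Type*} [Fintype n] [DecidableEq n]
    (A : Matrix n n ℝ) (B : Matrix n w ℝ) (N : ℕ) : Matrix n (Fin N × w) ℝ :=
  Matrix.of fun r c => (A ^ (N - 1 - (c.1 : ℕ)) * B) r c.2

/-- Lifted C matrix. -/
def liftC {n z : Type*} [Fintype n] [DecidableEq n]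
    (A : Matrix n n ℝ) (C : Matrix z n ℝ) (N : ℕ) : Matrix (Fin N × z) n ℝ :=
  Matrix.of fun r c => (C * A ^ (r.1 : ℕ)) r.2 c

/-- Lifted D matrix. -/
def liftD {n w z : Type*} [Fintype n] [DecidableEq n]
    (A : Matrix n n ℝ) (B : Matrix n w ℝ) (C : Matrix z n ℝ) (D : Matrix z w ℝ)
    (N : ℕ) : Matrix (Fin N × z) (Fin N × w) ℝ :=
  Matrix.of fun r c =>
    if (r.1 : ℕ) = (c.1 : ℕ) then D r.2 c.2
    else if (c.1 : ℕ) < (r.1 : ℕ) then (C * A ^ ((r.1 : ℕ) - (c.1 : ℕ) - 1) * B) r.2 c.2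
    else 0

/-- ReLU. -/
def relu {ι : Type*} (ξ : ι → ℝ) : ι → ℝ := fun i => max (ξ i) 0

/-- Positive maximal singular value. -/
def matPosNorm {ι κ : Type*} [Fintype ι] [Fintype κ] (M : Matrix ι κ ℝ) : ℝ :=
  sSup {c : ℝ | ∃ v : κ → ℝ, (∀ i, 0 ≤ v i) ∧ vecNorm v = 1 ∧ c = vecNorm (M.mulVec v)}

/-- Maximal singular value (spectral norm). -/
def matNorm {ι κ : Type*} [Fintype ι] [Fintype κ] (M : Matrix ι κ ℝ) : ℝ :=
  sSup {c : ℝ | ∃ v : κ → ℝ, vecNorm v = 1 ∧ c = vecNorm (M.mulVec v)}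


/-
The quadratic form of `L(A,B,C,D,P,Q,γ)` at `(x(k), w(k))` is exactly the one-step change of the
storage function `V(x) = xᵀ P x` plus the supply `-γ² |w(k)|² + w(k)ᵀ Q w(k) + |z(k)|²`, since
`x(k+1) = A x(k) + B w(k)` and `z(k) = C x(k) + D w(k)`. Negative semidefiniteness makes each of
these terms nonpositive, and summing over `k ≤ N` telescopes the storage from `V(x(0)) = 0`.
-/

open Finset

theorem dotProduct_self_eq_sum_sq {ι : Type*} [Fintype ι] (v : ι → ℝ) :
    v ⬝ᵥ v = ∑ i, v i ^ 2 := by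
  simp only [dotProduct, sq]

theorem add_sum_range_le_of_sub_add_le {V s : ℕ → ℝ} (h : ∀ k, V (k + 1) - V k + s k ≤ 0)
    (N : ℕ) : V N + ∑ k ∈ range N, s k ≤ V 0 := by
  induction N with
  | zero => simp
  | succ N ih =>
    rw [sum_range_succ]
    linarith [h N]

section Dissipation

variable {n w z : Type*} [Fintype n] [Fintype w] [Fintype z]
  [DecidableEq n] [DecidableEq w] [DecidableEq z]
  (A : Matrix n n ℝ) (B : Matrix n w ℝ) (C : Matrix z n ℝ) (D : Matrix z w ℝ)
  (P : Matrix n n ℝ) (Q : Matrix w w ℝ) (γ : ℝ)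

theorem sumElim_dotProduct_Lmat_mulVec_sumElim (x : n → ℝ) (y : w → ℝ) :
    Sum.elim x y ⬝ᵥ (Lmat A B C D P Q γ).mulVec (Sum.elim x y)
      = (A *ᵥ x + B *ᵥ y) ⬝ᵥ P *ᵥ (A *ᵥ x + B *ᵥ y) - x ⬝ᵥ P *ᵥ x
        - γ ^ 2 * (y ⬝ᵥ y) + y ⬝ᵥ Q *ᵥ y + (C *ᵥ x + D *ᵥ y) ⬝ᵥ (C *ᵥ x + D *ᵥ y) := by
  have hABCD : fromBlocks A B C D *ᵥ Sum.elim x y = Sum.elim (A *ᵥ x + B *ᵥ y) (C *ᵥ x + D *ᵥ y) := by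
    simp [fromBlocks_mulVec]
  have hgram : Sum.elim x y ⬝ᵥ ((fromBlocks A B C D)ᵀ * fromBlocks P 0 0 (1 : Matrix z z ℝ)
        * fromBlocks A B C D) *ᵥ Sum.elim x y
      = (A *ᵥ x + B *ᵥ y) ⬝ᵥ P *ᵥ (A *ᵥ x + B *ᵥ y)
        + (C *ᵥ x + D *ᵥ y) ⬝ᵥ (C *ᵥ x + D *ᵥ y) := by
    rw [Matrix.mul_assoc, ← mulVec_mulVec, ← mulVec_mulVec, hABCD, dotProduct_mulVec,
      vecMul_transpose, hABCD, fromBlocks_mulVec, sumElim_dotProduct_sumElim]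
    simp
  simp only [Lmat, add_mulVec, dotProduct_add, hgram, fromBlocks_mulVec,
    sumElim_dotProduct_sumElim]
  simp only [Sum.elim_comp_inl, Sum.elim_comp_inr, neg_mulVec, dotProduct_neg, zero_mulVec,
    dotProduct_zero, add_zero, zero_add, neg_smul, smul_mulVec, one_mulVec, dotProduct_smul,
    smul_eq_mul, add_dotProduct]
  ring

theorem storage_step_add_supply_nonpos (hL : (-Lmat A B C D P Q γ).PosSemidef)
    (x : n → ℝ) (y : w → ℝ) :
    (A *ᵥ x + B *ᵥ y) ⬝ᵥ P *ᵥ (A *ᵥ x + B *ᵥ y) - x ⬝ᵥ P *ᵥ x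
      - γ ^ 2 * (y ⬝ᵥ y) + y ⬝ᵥ Q *ᵥ y + (C *ᵥ x + D *ᵥ y) ⬝ᵥ (C *ᵥ x + D *ᵥ y) ≤ 0 := by
  have h := hL.dotProduct_mulVec_nonneg (Sum.elim x y)
  rw [neg_mulVec, dotProduct_neg, star_trivial,
    sumElim_dotProduct_Lmat_mulVec_sumElim] at h
  linarith

end Dissipation

theorem stmt_1_general (n nw nz : ℕ)
    (A : Matrix (Fin n) (Fin n) ℝ) (B : Matrix (Fin n) (Fin nw) ℝ)
    (C : Matrix (Fin nz) (Fin n) ℝ) (D : Matrix (Fin nz) (Fin nw) ℝ)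
    (γ : ℝ) (P : Matrix (Fin n) (Fin n) ℝ) (Q : Matrix (Fin nw) (Fin nw) ℝ)
    (hL : (-(Lmat A B C D P Q γ)).PosSemidef) :
    ∀ (ws : ℕ → Fin nw → ℝ) (N : ℕ),
      ltiState A B ws (N + 1) ⬝ᵥ P.mulVec (ltiState A B ws (N + 1))
        - γ ^ 2 * ∑ k ∈ Finset.range (N + 1), ∑ i, (ws k i) ^ 2
        + ∑ k ∈ Finset.range (N + 1), ws k ⬝ᵥ Q.mulVec (ws k)
        + ∑ k ∈ Finset.range (N + 1), ∑ i, (ltiOutput A B C D ws k i) ^ 2 ≤ 0 := by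
  intro ws N
  set x := ltiState A B ws
  have hstep (k : ℕ) : x (k + 1) ⬝ᵥ P *ᵥ x (k + 1) - x k ⬝ᵥ P *ᵥ x k
      + (-γ ^ 2 * ∑ i, ws k i ^ 2 + ws k ⬝ᵥ Q *ᵥ ws k + ∑ i, ltiOutput A B C D ws k i ^ 2)
      ≤ 0 := by
    have hx : x (k + 1) = A *ᵥ x k + B *ᵥ ws k := rfl
    have hout : C *ᵥ x k + D *ᵥ ws k = ltiOutput A B C D ws k := rfl
    have := storage_step_add_supply_nonpos A B C D P Q γ hL (x k) (ws k)
    rw [← hx, hout, dotProduct_self_eq_sum_sq, dotProduct_self_eq_sum_sq] at this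
    linarith
  have htel := add_sum_range_le_of_sub_add_le (V := fun k => x k ⬝ᵥ P *ᵥ x k) hstep (N + 1)
  simp only [sum_add_distrib, ← mul_sum] at htel
  have hx0 : x 0 ⬝ᵥ P *ᵥ x 0 = 0 := by simp [x, ltiState]
  linarith

/-- the dissipation inequality obtained by summing the quadratic-form
inequalities induced by L(A,B,C,D,P,Q,γ̃) ⪯ 0. -/
theorem stmt_1 (n nw nz : ℕ)
    (A : Matrix (Fin n) (Fin n) ℝ) (B : Matrix (Fin n) (Fin nw) ℝ)
    (C : Matrix (Fin nz) (Fin n) ℝ) (D : Matrix (Fin nz) (Fin nw) ℝ)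
    (γ : ℝ) (P : Matrix (Fin n) (Fin n) ℝ) (Q : Matrix (Fin nw) (Fin nw) ℝ)
    (hγ : 0 < γ) (hP : P.IsSymm) (hQ : Q.IsSymm)
    (hL : (-(Lmat A B C D P Q γ)).PosSemidef) :
    ∀ (ws : ℕ → Fin nw → ℝ) (N : ℕ),
      ltiState A B ws (N + 1) ⬝ᵥ P.mulVec (ltiState A B ws (N + 1))
        - γ ^ 2 * ∑ k ∈ Finset.range (N + 1), ∑ i, (ws k i) ^ 2
        + ∑ k ∈ Finset.range (N + 1), ws k ⬝ᵥ Q.mulVec (ws k)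
        + ∑ k ∈ Finset.range (N + 1), ∑ i, (ltiOutput A B C D ws k i) ^ 2 ≤ 0 :=
  stmt_1_general n nw nz A B C D γ P Q hL

end
end

section
/- For N ∈ ℕ define γ̄_{N+} := inf{ γ > 0 : ∃ P ∈ ℝ^{n×n} positive semidefinite and Q ∈ ℝ^{Nn_w×Nn_w} copositive with L(Â_N, B̂_N, Ĉ_N, D̂_N, P, Q, γ) ≺ 0 }, and define γ̄̄_{N+} in the same way but with Q required to be a sum of a positive semidefinite matrix and a symmetric entrywise nonnegative matrix. Then for all N₁, N₂, p ∈ ℕ with N₂ = pN₁, one has γ̄_{N₂+} ≤ γ̄_{N₁+} and γ̄̄_{N₂+} ≤ γ̄̄_{N₁+}. -/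
open Matrix

noncomputable section

/-- γ̄_{N+}: infimum of γ > 0 for which the lifted LMI is feasible with a copositive Q. -/
def gammaBarPlus {n nw nz : ℕ}
    (A : Matrix (Fin n) (Fin n) ℝ) (B : Matrix (Fin n) (Fin nw) ℝ)
    (C : Matrix (Fin nz) (Fin n) ℝ) (D : Matrix (Fin nz) (Fin nw) ℝ) (N : ℕ) : ℝ :=
  sInf {γ : ℝ | 0 < γ ∧ ∃ (P : Matrix (Fin n) (Fin n) ℝ)
    (Q : Matrix (Fin N × Fin nw) (Fin N × Fin nw) ℝ),
    P.PosSemidef ∧ Copositive Q ∧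
    (-(Lmat (liftA A N) (liftB A B N) (liftC A C N) (liftD A B C D N) P Q γ)).PosDef}

/-- γ̄̄_{N+}: infimum of γ > 0 for which the lifted LMI is feasible with
Q a sum of a positive semidefinite matrix and a symmetric entrywise nonnegative matrix. -/
def gammaBarBarPlus {n nw nz : ℕ}
    (A : Matrix (Fin n) (Fin n) ℝ) (B : Matrix (Fin n) (Fin nw) ℝ)
    (C : Matrix (Fin nz) (Fin n) ℝ) (D : Matrix (Fin nz) (Fin nw) ℝ) (N : ℕ) : ℝ :=
  sInf {γ : ℝ | 0 < γ ∧ ∃ (P : Matrix (Fin n) (Fin n) ℝ)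
    (Q Q₁ Q₂ : Matrix (Fin N × Fin nw) (Fin N × Fin nw) ℝ),
    P.PosSemidef ∧ Q = Q₁ + Q₂ ∧ Q₁.PosSemidef ∧ Q₂.IsSymm ∧ (∀ i j, 0 ≤ Q₂ i j) ∧
    (-(Lmat (liftA A N) (liftB A B N) (liftC A C N) (liftD A B C D N) P Q γ)).PosDef}

/-!
Along a trajectory of `(A, B)`, the quadratic form of `L` for the `pN`-lifted system with
`Q̂ = diag(Q, …, Q)` is the sum of the quadratic forms of `L` for the `N`-lifted system over the
`p` consecutive windows of length `N`: the `P`-terms telescope across the window boundaries. Hence a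
triple `(P, Q, γ)` feasible at `N` gives the feasible triple `(P, Q̂, γ)` at `pN`, as `Q̂` inherits
copositivity, resp. a splitting into a positive semidefinite and a nonnegative part, from `Q`.

Since `sInf ∅ = 0` in `ℝ`, the inclusion of feasible sets is not enough: feasibility at `pN` must
also give feasibility at `N`. The top-left block of the `pN`-inequality says that `P` decreases
strictly over `p` steps of `A^N`; with `P₁ = ∑_{i<p} (A^{iN})ᵀ P A^{iN}` the top-left block of the
`N`-inequality is then negative definite, and a Schur complement argument shows that the
`N`-inequality holds with `Q = 0` once `γ` is large.
-/

namespace Matrix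

variable {m n o : Type*} [Fintype m] [Fintype n]

theorem PosDef.fromBlocks₁₁_of_schur [DecidableEq m] {A : Matrix m m ℝ} (B : Matrix m n ℝ)
    (D : Matrix n n ℝ) (hA : A.PosDef) [Invertible A] (hS : (D - Bᴴ * A⁻¹ * B).PosDef) :
    (fromBlocks A B Bᴴ D).PosDef := by
  refine .of_dotProduct_mulVec_pos ((IsHermitian.fromBlocks₁₁ B D hA.1).2 hS.1) fun xy hxy => ?_
  rw [dotProduct_mulVec, ← Sum.elim_comp_inl_inr xy, schur_complement_eq₁₁ B D _ _ hA.1,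
    ← dotProduct_mulVec, ← dotProduct_mulVec]
  by_cases hy : xy ∘ Sum.inr = 0
  · have hx : xy ∘ Sum.inl ≠ 0 := fun hx =>
      hxy (by rw [← Sum.elim_comp_inl_inr xy, hx, hy, Sum.elim_zero_zero])
    rw [hy, mulVec_zero, add_zero, star_zero, zero_dotProduct, add_zero]
    exact hA.dotProduct_mulVec_pos hx
  · exact add_pos_of_nonneg_of_pos (hA.posSemidef.dotProduct_mulVec_nonneg _)
      (hS.dotProduct_mulVec_pos hy)

theorem dotProduct_mulVec_le_sum_abs_mul (M : Matrix n n ℝ) (x : n → ℝ) :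
    x ⬝ᵥ M *ᵥ x ≤ (∑ i, ∑ j, |M i j|) * (x ⬝ᵥ x) := by
  have hsq : ∀ i, x i * x i ≤ x ⬝ᵥ x := fun i =>
    Finset.single_le_sum (f := fun i => x i * x i) (fun i _ => mul_self_nonneg _)
      (Finset.mem_univ i)
  have hentry : ∀ i j, x i * (M i j * x j) ≤ |M i j| * (x ⬝ᵥ x) := fun i j => by
    have hxx : |x i * x j| ≤ x ⬝ᵥ x := by
      rw [abs_mul]
      nlinarith [sq_abs (x i), sq_abs (x j), hsq i, hsq j, sq_nonneg (|x i| - |x j|)]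
    calc x i * (M i j * x j) ≤ |M i j * (x i * x j)| := by
          rw [show x i * (M i j * x j) = M i j * (x i * x j) by ring]; exact le_abs_self _
      _ ≤ |M i j| * (x ⬝ᵥ x) := by rw [abs_mul]; gcongr
  calc x ⬝ᵥ M *ᵥ x = ∑ i, ∑ j, x i * (M i j * x j) := by
        simp only [dotProduct, mulVec, Finset.mul_sum]
    _ ≤ ∑ i, ∑ j, |M i j| * (x ⬝ᵥ x) :=
        Finset.sum_le_sum fun i _ => Finset.sum_le_sum fun j _ => hentry i j
    _ = (∑ i, ∑ j, |M i j|) * (x ⬝ᵥ x) := by simp only [Finset.sum_mul]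

theorem exists_posDef_smul_one_sub [DecidableEq n] {M : Matrix n n ℝ} (hM : M.IsHermitian) :
    ∃ t : ℝ, 0 < t ∧ (t • 1 - M).PosDef := by
  refine ⟨∑ i, ∑ j, |M i j| + 1, by positivity, .of_dotProduct_mulVec_pos ?_ fun x hx => ?_⟩
  · exact (isHermitian_one.smul (.all _)).sub hM
  · have hM := M.dotProduct_mulVec_le_sum_abs_mul x
    have hx := dotProduct_star_self_pos_iff.2 hx
    simp only [star_trivial, sub_mulVec, smul_mulVec, one_mulVec, dotProduct_sub,
      dotProduct_smul, smul_eq_mul] at *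
    nlinarith

theorem dotProduct_transpose_mul_mul_mulVec [Fintype o] (M : Matrix m o ℝ) (K : Matrix m n ℝ)
    (M' : Matrix n o ℝ) (x y : o → ℝ) :
    x ⬝ᵥ (Mᵀ * K * M') *ᵥ y = (M *ᵥ x) ⬝ᵥ K *ᵥ (M' *ᵥ y) := by
  rw [← mulVec_mulVec, ← mulVec_mulVec, dotProduct_mulVec, vecMul_transpose]

theorem dotProduct_transpose_mul_mulVec [Fintype o] (M : Matrix m o ℝ) (M' : Matrix m n ℝ)
    (x : o → ℝ) (y : n → ℝ) : x ⬝ᵥ (Mᵀ * M') *ᵥ y = (M *ᵥ x) ⬝ᵥ (M' *ᵥ y) := by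
  rw [← mulVec_mulVec, dotProduct_mulVec, vecMul_transpose]

theorem dotProduct_sum_pow_mulVec_sub [DecidableEq n] (A P : Matrix n n ℝ) (p : ℕ) (x : n → ℝ) :
    (A *ᵥ x) ⬝ᵥ (∑ i ∈ Finset.range p, (A ^ i)ᵀ * P * A ^ i) *ᵥ (A *ᵥ x)
      - x ⬝ᵥ (∑ i ∈ Finset.range p, (A ^ i)ᵀ * P * A ^ i) *ᵥ x =
        (A ^ p *ᵥ x) ⬝ᵥ P *ᵥ (A ^ p *ᵥ x) - x ⬝ᵥ P *ᵥ x := by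
  have hsum (y : n → ℝ) : y ⬝ᵥ (∑ i ∈ Finset.range p, (A ^ i)ᵀ * P * A ^ i) *ᵥ y =
      ∑ i ∈ Finset.range p, (A ^ i *ᵥ y) ⬝ᵥ P *ᵥ (A ^ i *ᵥ y) := by
    simp only [sum_mulVec, dotProduct_sum, dotProduct_transpose_mul_mul_mulVec]
  have hshift (i : ℕ) : A ^ i *ᵥ (A *ᵥ x) = A ^ (i + 1) *ᵥ x := by rw [mulVec_mulVec, ← pow_succ]
  rw [hsum, hsum]
  simp only [hshift]
  rw [← Finset.sum_sub_distrib, Finset.sum_range_sub (fun i => (A ^ i *ᵥ x) ⬝ᵥ P *ᵥ (A ^ i *ᵥ x)),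
    pow_zero, one_mulVec]

end Matrix

section LMI

variable {n w z : Type*} [Fintype n] [Fintype w] [Fintype z]
  (A : Matrix n n ℝ) (B : Matrix n w ℝ) (C : Matrix z n ℝ) (D : Matrix z w ℝ)

def Lform (P : Matrix n n ℝ) (Q : Matrix w w ℝ) (γ : ℝ) (x : n → ℝ) (v : w → ℝ) : ℝ :=
  (A *ᵥ x + B *ᵥ v) ⬝ᵥ P *ᵥ (A *ᵥ x + B *ᵥ v) - x ⬝ᵥ P *ᵥ x
    + (C *ᵥ x + D *ᵥ v) ⬝ᵥ (C *ᵥ x + D *ᵥ v) + v ⬝ᵥ Q *ᵥ v - γ ^ 2 * (v ⬝ᵥ v)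

variable [DecidableEq n] [DecidableEq w] [DecidableEq z]

theorem Lmat_eq_fromBlocks (P : Matrix n n ℝ) (Q : Matrix w w ℝ) (γ : ℝ) :
    Lmat A B C D P Q γ = fromBlocks (Aᵀ * P * A + Cᵀ * C - P) (Aᵀ * P * B + Cᵀ * D)
      (Bᵀ * P * A + Dᵀ * C) (Bᵀ * P * B + Dᵀ * D + Q - γ ^ 2 • 1) := by
  simp only [Lmat, fromBlocks_transpose, fromBlocks_multiply, fromBlocks_add, Matrix.mul_zero,
    Matrix.mul_one, add_zero, zero_add, neg_smul]
  congr 1 <;> abel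

variable {A B C D} in
theorem isHermitian_Lmat {P : Matrix n n ℝ} {Q : Matrix w w ℝ} (hP : P.IsHermitian)
    (hQ : Q.IsHermitian) (γ : ℝ) : (Lmat A B C D P Q γ).IsHermitian := by
  rw [Lmat, ← conjTranspose_eq_transpose_of_trivial]
  refine .add ?_ (isHermitian_conjTranspose_mul_mul _ ?_)
  · exact isHermitian_fromBlocks_iff.2 ⟨hP.neg, by simp, by simp,
      ((isHermitian_one.smul (.all _)).add hQ)⟩
  · exact isHermitian_fromBlocks_iff.2 ⟨hP, by simp, by simp, isHermitian_one⟩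

theorem sumElim_dotProduct_Lmat_mulVec (P : Matrix n n ℝ) (Q : Matrix w w ℝ) (γ : ℝ)
    (x : n → ℝ) (v : w → ℝ) :
    (x ⊕ᵥ v) ⬝ᵥ Lmat A B C D P Q γ *ᵥ (x ⊕ᵥ v) = Lform A B C D P Q γ x v := by
  have hAB : fromBlocks A B C D *ᵥ (x ⊕ᵥ v) = (A *ᵥ x + B *ᵥ v) ⊕ᵥ (C *ᵥ x + D *ᵥ v) := by
    simp [fromBlocks_mulVec]
  rw [Lmat, add_mulVec, dotProduct_add, dotProduct_transpose_mul_mul_mulVec, hAB]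
  simp only [fromBlocks_mulVec, Sum.elim_comp_inl, Sum.elim_comp_inr, sumElim_dotProduct_sumElim,
    zero_mulVec, add_zero, zero_add, one_mulVec, neg_mulVec, add_mulVec, smul_mulVec,
    dotProduct_add, dotProduct_neg, dotProduct_smul, smul_eq_mul, Lform]
  ring

variable {A B C D} {P : Matrix n n ℝ} {Q : Matrix w w ℝ} {γ : ℝ}

theorem Lform_lt_zero_of_posDef (h : (-(Lmat A B C D P Q γ)).PosDef) {x : n → ℝ} {v : w → ℝ}
    (hxv : x ≠ 0 ∨ v ≠ 0) : Lform A B C D P Q γ x v < 0 := by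
  have hxv : x ⊕ᵥ v ≠ 0 := fun h0 => hxv.elim (· (funext fun i => congrFun h0 (.inl i)))
    (· (funext fun i => congrFun h0 (.inr i)))
  have := h.dotProduct_mulVec_pos hxv
  rwa [star_trivial, neg_mulVec, dotProduct_neg, neg_pos, sumElim_dotProduct_Lmat_mulVec] at this

theorem Lform_nonpos_of_posDef (h : (-(Lmat A B C D P Q γ)).PosDef) (x : n → ℝ) (v : w → ℝ) :
    Lform A B C D P Q γ x v ≤ 0 := by
  by_cases hxv : x = 0 ∧ v = 0
  · simp [hxv.1, hxv.2, Lform]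
  · exact (Lform_lt_zero_of_posDef h (not_and_or.1 hxv)).le

theorem posDef_neg_Lmat_of_Lform_lt_zero (hP : P.IsHermitian) (hQ : Q.IsHermitian)
    (h : ∀ x v, (x ≠ 0 ∨ v ≠ 0) → Lform A B C D P Q γ x v < 0) :
    (-(Lmat A B C D P Q γ)).PosDef := by
  refine .of_dotProduct_mulVec_pos (isHermitian_Lmat hP hQ γ).neg fun xv hxv => ?_
  rw [star_trivial, neg_mulVec, dotProduct_neg, neg_pos, ← Sum.elim_comp_inl_inr xv,
    sumElim_dotProduct_Lmat_mulVec]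
  refine h _ _ (not_and_or.1 fun h0 => hxv ?_)
  rw [← Sum.elim_comp_inl_inr xv, h0.1, h0.2, Sum.elim_zero_zero]

theorem exists_posDef_neg_Lmat (hP : P.IsHermitian) (hQ : Q.IsHermitian)
    (hT : (P - Aᵀ * P * A - Cᵀ * C).PosDef) :
    ∃ γ > 0, (-(Lmat A B C D P Q γ)).PosDef := by
  set T := P - Aᵀ * P * A - Cᵀ * C
  set E := -(Aᵀ * P * B + Cᵀ * D)
  have : Invertible T := hT.isUnit.invertible
  -- The Schur complement of `T` in `-L` is `γ² • 1 - M` for the `M` below.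
  have hM : (Bᵀ * P * B + Dᵀ * D + Q + Eᴴ * T⁻¹ * E).IsHermitian := by
    simp only [← conjTranspose_eq_transpose_of_trivial]
    exact (((isHermitian_conjTranspose_mul_mul B hP).add (isHermitian_conjTranspose_mul_self D)).add
      hQ).add (isHermitian_conjTranspose_mul_mul E hT.1.inv)
  obtain ⟨t, ht, hS⟩ := exists_posDef_smul_one_sub hM
  refine ⟨√t, Real.sqrt_pos.2 ht, ?_⟩
  have hL : -Lmat A B C D P Q √t =
      fromBlocks T E Eᴴ (t • 1 - (Bᵀ * P * B + Dᵀ * D + Q)) := by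
    rw [Lmat_eq_fromBlocks, fromBlocks_neg, Real.sq_sqrt ht.le]
    congr 1
    · simp only [T]; abel
    · simp [E, conjTranspose_eq_transpose_of_trivial, transpose_mul,
        (isHermitian_iff_isSymm.1 hP).eq, Matrix.mul_assoc]
    · abel
  rw [hL]
  refine PosDef.fromBlocks₁₁_of_schur E _ hT ?_
  convert hS using 1
  abel

end LMI

section Trajectory

variable {n w z : Type*} [Fintype n] [Fintype w]
  (A : Matrix n n ℝ) (B : Matrix n w ℝ)

def trajectory (x₀ : n → ℝ) (u : ℕ → w → ℝ) : ℕ → n → ℝ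
  | 0 => x₀
  | k + 1 => A *ᵥ trajectory x₀ u k + B *ᵥ u k

theorem trajectory_add (x₀ : n → ℝ) (u : ℕ → w → ℝ) (m k : ℕ) :
    trajectory A B x₀ u (m + k) =
      trajectory A B (trajectory A B x₀ u m) (fun t => u (m + t)) k := by
  induction k with
  | zero => rfl
  | succ k ih => rw [← Nat.add_assoc, trajectory, ih]; rfl

variable [DecidableEq n]

theorem trajectory_eq (x₀ : n → ℝ) (u : ℕ → w → ℝ) (k : ℕ) :
    trajectory A B x₀ u k = A ^ k *ᵥ x₀ + ∑ t ∈ Finset.range k, A ^ (k - 1 - t) *ᵥ B *ᵥ u t := by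
  induction k with
  | zero => simp [trajectory]
  | succ k ih =>
    rw [trajectory, ih, mulVec_add, mulVec_mulVec, ← pow_succ', mulVec_sum, Finset.sum_range_succ,
      Nat.add_sub_cancel, Nat.sub_self, pow_zero, one_mulVec, add_assoc]
    congr 2
    refine Finset.sum_congr rfl fun t ht => ?_
    rw [mulVec_mulVec, ← pow_succ', show k - 1 - t + 1 = k - t by
      have := Finset.mem_range.1 ht; omega]

theorem liftB_mulVec (N : ℕ) (v : Fin N × w → ℝ) :
    liftB A B N *ᵥ v = ∑ k : Fin N, A ^ (N - 1 - (k : ℕ)) *ᵥ B *ᵥ fun a => v (k, a) := by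
  ext r
  simp only [mulVec, dotProduct, liftB, of_apply, Fintype.sum_prod_type, Finset.sum_apply,
    mul_apply, Finset.sum_mul, Finset.mul_sum]
  refine Finset.sum_congr rfl fun k _ => ?_
  rw [Finset.sum_comm]
  exact Finset.sum_congr rfl fun q _ => Finset.sum_congr rfl fun c _ => mul_assoc _ _ _

variable (C : Matrix z n ℝ) (D : Matrix z w ℝ)

def window (u : ℕ → w → ℝ) (t N : ℕ) : Fin N × w → ℝ := fun ka => u (t + ka.1) ka.2

theorem liftA_mulVec_add_liftB_mulVec (N t : ℕ) (x₀ : n → ℝ) (u : ℕ → w → ℝ) :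
    liftA A N *ᵥ trajectory A B x₀ u t + liftB A B N *ᵥ window u t N =
      trajectory A B x₀ u (t + N) := by
  rw [trajectory_add, trajectory_eq A B (trajectory A B x₀ u t), liftB_mulVec, liftA,
    ← Fin.sum_univ_eq_sum_range (fun s => A ^ (N - 1 - s) *ᵥ B *ᵥ u (t + s))]
  rfl

theorem liftD_mulVec_window_apply (N t : ℕ) (u : ℕ → w → ℝ) (k : Fin N) (i : z) :
    (liftD A B C D N *ᵥ window u t N) (k, i) =
      ∑ s ∈ Finset.range k, ((C * A ^ ((k : ℕ) - 1 - s) * B) *ᵥ u (t + s)) i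
        + (D *ᵥ u (t + k)) i := by
  let g : ℕ → ℝ := fun s => ∑ a, (if (k : ℕ) = s then D i a
    else if s < k then (C * A ^ ((k : ℕ) - s - 1) * B) i a else 0) * u (t + s) a
  have hfuture : ∑ s ∈ Finset.Ico ((k : ℕ) + 1) N, g s = 0 :=
    Finset.sum_eq_zero fun s hs => Finset.sum_eq_zero fun a _ => by
      have := (Finset.mem_Ico.1 hs).1
      rw [if_neg (by omega), if_neg (by omega), zero_mul]
  have hpast : ∀ s ∈ Finset.range k, g s = ((C * A ^ ((k : ℕ) - 1 - s) * B) *ᵥ u (t + s)) i :=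
    fun s hs => Finset.sum_congr rfl fun a _ => by
      have := Finset.mem_range.1 hs
      rw [if_neg (by omega), if_pos this, Nat.sub_right_comm]
  calc (liftD A B C D N *ᵥ window u t N) (k, i) = ∑ s ∈ Finset.range N, g s := by
        simp only [mulVec, dotProduct, liftD, window, of_apply, Fintype.sum_prod_type]
        exact Fin.sum_univ_eq_sum_range g N
    _ = ∑ s ∈ Finset.range k, g s + g k := by
        rw [← Finset.sum_range_add_sum_Ico g k.2, hfuture, add_zero, Finset.sum_range_succ]
    _ = _ := by
        rw [Finset.sum_congr rfl hpast]
        congr 1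
        exact Finset.sum_congr rfl fun a _ => by rw [if_pos rfl]

theorem liftC_mulVec_add_liftD_mulVec_apply (N t : ℕ) (x₀ : n → ℝ) (u : ℕ → w → ℝ)
    (k : Fin N) (i : z) :
    (liftC A C N *ᵥ trajectory A B x₀ u t + liftD A B C D N *ᵥ window u t N) (k, i) =
      (C *ᵥ trajectory A B x₀ u (t + k) + D *ᵥ u (t + k)) i := by
  have hC : (liftC A C N *ᵥ trajectory A B x₀ u t) (k, i) =
      ((C * A ^ (k : ℕ)) *ᵥ trajectory A B x₀ u t) i := rfl
  rw [Pi.add_apply, hC, liftD_mulVec_window_apply, trajectory_add,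
    trajectory_eq A B (trajectory A B x₀ u t), mulVec_add,
    mulVec_sum, mulVec_mulVec]
  simp only [Pi.add_apply, Finset.sum_apply, mulVec_mulVec, Matrix.mul_assoc]
  ring

theorem liftC_mulVec_dotProduct_self_le_of_le [Fintype z] {N M : ℕ} (hNM : N ≤ M) (x : n → ℝ) :
    (liftC A C N *ᵥ x) ⬝ᵥ (liftC A C N *ᵥ x) ≤ (liftC A C M *ᵥ x) ⬝ᵥ (liftC A C M *ᵥ x) := by
  have h (K : ℕ) : (liftC A C K *ᵥ x) ⬝ᵥ (liftC A C K *ᵥ x) =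
      ∑ k ∈ Finset.range K, ((C * A ^ k) *ᵥ x) ⬝ᵥ ((C * A ^ k) *ᵥ x) := by
    rw [dotProduct, Fintype.sum_prod_type,
      ← Fin.sum_univ_eq_sum_range (fun k => ((C * A ^ k) *ᵥ x) ⬝ᵥ ((C * A ^ k) *ᵥ x))]
    rfl
  rw [h, h]
  exact Finset.sum_le_sum_of_subset_of_nonneg (Finset.range_mono hNM) fun _ _ _ => by
    simpa using dotProduct_star_self_nonneg ((C * A ^ _) *ᵥ x)

end Trajectory


section Blocks

variable {p N : ℕ} {α : Type*}

variable (p N α) in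
def blockEquiv : Fin (p * N) × α ≃ Fin p × (Fin N × α) :=
  (finProdFinEquiv.symm.prodCongr (Equiv.refl α)).trans (Equiv.prodAssoc _ _ _)

theorem blockEquiv_symm_apply_fst_val (j : Fin p) (ia : Fin N × α) :
    (((blockEquiv p N α).symm (j, ia)).1 : ℕ) = j * N + ia.1 := by
  simp [blockEquiv, Nat.add_comm, Nat.mul_comm]

theorem blockEquiv_symm_apply_snd (j : Fin p) (ia : Fin N × α) :
    ((blockEquiv p N α).symm (j, ia)).2 = ia.2 :=
  rfl

variable (p) in
def blockSlice (v : Fin (p * N) × α → ℝ) (j : Fin p) : Fin N × α → ℝ :=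
  fun ia => v ((blockEquiv p N α).symm (j, ia))

theorem exists_blockSlice_ne_zero {v : Fin (p * N) × α → ℝ} (hv : v ≠ 0) :
    ∃ j, blockSlice p v j ≠ 0 := by
  by_contra! h
  refine hv (funext fun ka => ?_)
  simpa [blockSlice] using congrFun (h (blockEquiv p N α ka).1) (blockEquiv p N α ka).2

variable (p) in
def diagRepeat (Q : Matrix (Fin N × α) (Fin N × α) ℝ) :
    Matrix (Fin (p * N) × α) (Fin (p * N) × α) ℝ :=
  of fun r c => if (blockEquiv p N α r).1 = (blockEquiv p N α c).1
    then Q (blockEquiv p N α r).2 (blockEquiv p N α c).2 else 0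

theorem diagRepeat_add (Q₁ Q₂ : Matrix (Fin N × α) (Fin N × α) ℝ) :
    diagRepeat p (Q₁ + Q₂) = diagRepeat p Q₁ + diagRepeat p Q₂ := by
  ext r c
  simp only [diagRepeat, of_apply, Matrix.add_apply]
  split_ifs <;> simp

theorem Matrix.IsSymm.diagRepeat {Q : Matrix (Fin N × α) (Fin N × α) ℝ} (hQ : Q.IsSymm) :
    (diagRepeat p Q).IsSymm :=
  IsSymm.ext fun r c => by
    simp only [_root_.diagRepeat, of_apply, eq_comm (a := (blockEquiv p N α c).1), hQ.apply]

theorem diagRepeat_nonneg {Q : Matrix (Fin N × α) (Fin N × α) ℝ} (hQ : ∀ i j, 0 ≤ Q i j)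
    (r c : Fin (p * N) × α) : 0 ≤ diagRepeat p Q r c := by
  simp only [diagRepeat, of_apply]
  split_ifs
  exacts [hQ _ _, le_rfl]

theorem blockSlice_window (p N t : ℕ) (u : ℕ → α → ℝ) (j : Fin p) :
    blockSlice p (window u t (p * N)) j = window u (t + j * N) N := by
  ext ia
  simp [blockSlice, window, blockEquiv_symm_apply_fst_val, blockEquiv_symm_apply_snd, add_assoc]

variable [Fintype α]

theorem sum_eq_sum_blockSlice {M : Type*} [AddCommMonoid M] (f : Fin (p * N) × α → M) :
    ∑ ka, f ka = ∑ j : Fin p, ∑ ia : Fin N × α, f ((blockEquiv p N α).symm (j, ia)) := by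
  rw [← Fintype.sum_prod_type', Equiv.sum_comp (blockEquiv p N α).symm f]

theorem dotProduct_eq_sum_blockSlice (u v : Fin (p * N) × α → ℝ) :
    u ⬝ᵥ v = ∑ j, blockSlice p u j ⬝ᵥ blockSlice p v j :=
  sum_eq_sum_blockSlice _

theorem dotProduct_diagRepeat_mulVec (Q : Matrix (Fin N × α) (Fin N × α) ℝ)
    (u v : Fin (p * N) × α → ℝ) :
    u ⬝ᵥ diagRepeat p Q *ᵥ v = ∑ j, blockSlice p u j ⬝ᵥ Q *ᵥ blockSlice p v j := by
  rw [dotProduct_eq_sum_blockSlice]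
  refine Finset.sum_congr rfl fun j _ => Finset.sum_congr rfl fun ia _ => ?_
  simp only [blockSlice, mulVec, dotProduct, diagRepeat, of_apply, Equiv.apply_symm_apply]
  rw [sum_eq_sum_blockSlice, Finset.sum_eq_single j (fun j' _ hj' => by simp [Ne.symm hj'])
    (by simp)]
  simp

theorem Matrix.PosSemidef.diagRepeat {Q : Matrix (Fin N × α) (Fin N × α) ℝ}
    (hQ : Q.PosSemidef) : (diagRepeat p Q).PosSemidef := by
  refine .of_dotProduct_mulVec_nonneg (isHermitian_iff_isSymm.2
    (isHermitian_iff_isSymm.1 hQ.1).diagRepeat) fun x => ?_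
  rw [star_trivial, dotProduct_diagRepeat_mulVec]
  exact Finset.sum_nonneg fun j _ => by simpa using hQ.dotProduct_mulVec_nonneg (blockSlice p x j)

theorem Copositive.diagRepeat {Q : Matrix (Fin N × α) (Fin N × α) ℝ} (hQ : Copositive Q) :
    Copositive (diagRepeat p Q) := by
  refine ⟨hQ.1.diagRepeat, fun x hx => ?_⟩
  rw [dotProduct_diagRepeat_mulVec]
  exact Finset.sum_nonneg fun j _ => hQ.2 _ fun _ => hx _

end Blocks

section Lifting

variable {n w z : Type*} [Fintype n] [Fintype w] [Fintype z] [DecidableEq n]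
  (A : Matrix n n ℝ) (B : Matrix n w ℝ) (C : Matrix z n ℝ) (D : Matrix z w ℝ)

theorem Lform_lift_mul_eq_sum (N p : ℕ) (P : Matrix n n ℝ) (Q : Matrix (Fin N × w) (Fin N × w) ℝ)
    (γ : ℝ) (x : n → ℝ) (u : ℕ → w → ℝ) :
    Lform (liftA A (p * N)) (liftB A B (p * N)) (liftC A C (p * N)) (liftD A B C D (p * N))
        P (diagRepeat p Q) γ x (window u 0 (p * N)) =
      ∑ j : Fin p, Lform (liftA A N) (liftB A B N) (liftC A C N) (liftD A B C D N) P Q γ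
        (trajectory A B x u (j * N)) (window u (j * N) N) := by
  set x' : ℕ → n → ℝ := trajectory A B x u
  have hin (j : Fin p) : blockSlice p (window u 0 (p * N)) j = window u (j * N) N := by
    rw [blockSlice_window, zero_add]
  have hout (j : Fin p) :
      blockSlice p (liftC A C (p * N) *ᵥ x + liftD A B C D (p * N) *ᵥ window u 0 (p * N)) j =
        liftC A C N *ᵥ x' (j * N) + liftD A B C D N *ᵥ window u (j * N) N := by
    ext ⟨k, i⟩
    have hk : 0 + (((blockEquiv p N z).symm (j, (k, i))).1 : ℕ) = j * N + k := by
      rw [zero_add, blockEquiv_symm_apply_fst_val]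
    rw [liftC_mulVec_add_liftD_mulVec_apply, ← hk]
    exact liftC_mulVec_add_liftD_mulVec_apply A B C D (p * N) 0 x u _ i
  have hstate (j : Fin p) :
      liftA A N *ᵥ x' (j * N) + liftB A B N *ᵥ window u (j * N) N = x' ((j + 1) * N) := by
    rw [liftA_mulVec_add_liftB_mulVec, Nat.succ_mul]
  have hfinal : liftA A (p * N) *ᵥ x + liftB A B (p * N) *ᵥ window u 0 (p * N) = x' (p * N) := by
    have h := liftA_mulVec_add_liftB_mulVec A B (p * N) 0 x u
    rw [zero_add] at h
    exact h
  have htel : ∑ j : Fin p, x' ((j + 1) * N) ⬝ᵥ P *ᵥ x' ((j + 1) * N)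
      - ∑ j : Fin p, x' (j * N) ⬝ᵥ P *ᵥ x' (j * N) =
        x' (p * N) ⬝ᵥ P *ᵥ x' (p * N) - x ⬝ᵥ P *ᵥ x := by
    let q : ℕ → ℝ := fun j => x' (j * N) ⬝ᵥ P *ᵥ x' (j * N)
    rw [← Finset.sum_sub_distrib, Fin.sum_univ_eq_sum_range (fun j => q (j + 1) - q j),
      Finset.sum_range_sub q]
    simp only [q, zero_mul]
    rfl
  rw [Lform, hfinal, dotProduct_eq_sum_blockSlice (liftC A C (p * N) *ᵥ x + _),
    dotProduct_diagRepeat_mulVec, dotProduct_eq_sum_blockSlice (window u 0 (p * N))]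
  simp only [Lform, hin, hout, hstate, Finset.sum_add_distrib, Finset.sum_sub_distrib,
    ← Finset.mul_sum]
  linarith [htel]

variable {A B C D} [DecidableEq w] [DecidableEq z]

theorem posDef_neg_Lmat_lift_mul {N p : ℕ} (hp : 0 < p) {P : Matrix n n ℝ}
    {Q : Matrix (Fin N × w) (Fin N × w) ℝ} {γ : ℝ} (hP : P.IsHermitian) (hQ : Q.IsSymm)
    (hL : (-(Lmat (liftA A N) (liftB A B N) (liftC A C N) (liftD A B C D N) P Q γ)).PosDef) :
    (-(Lmat (liftA A (p * N)) (liftB A B (p * N)) (liftC A C (p * N)) (liftD A B C D (p * N))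
      P (diagRepeat p Q) γ)).PosDef := by
  refine posDef_neg_Lmat_of_Lform_lt_zero hP (isHermitian_iff_isSymm.2 hQ.diagRepeat)
    fun x v hxv => ?_
  let u : ℕ → w → ℝ := fun k a => if h : k < p * N then v (⟨k, h⟩, a) else 0
  have hv : v = window u 0 (p * N) := by ext ⟨k, a⟩; simp [u, window]
  obtain ⟨j, hj⟩ : ∃ j : Fin p, trajectory A B x u (j * N) ≠ 0 ∨ window u (j * N) N ≠ 0 := by
    rcases hxv with hx | hv0
    · exact ⟨⟨0, hp⟩, .inl (by simpa [trajectory] using hx)⟩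
    · obtain ⟨j, hj⟩ := exists_blockSlice_ne_zero (p := p) hv0
      rw [hv, blockSlice_window, zero_add] at hj
      exact ⟨j, .inr hj⟩
  rw [hv, Lform_lift_mul_eq_sum]
  rw [← Finset.sum_const_zero (s := (Finset.univ : Finset (Fin p)))]
  exact Finset.sum_lt_sum (fun i _ => Lform_nonpos_of_posDef hL _ _)
    ⟨j, Finset.mem_univ _, Lform_lt_zero_of_posDef hL hj⟩

theorem exists_posDef_neg_Lmat_of_lift_mul {N p : ℕ} (hp : 0 < p) {P : Matrix n n ℝ}
    {Q : Matrix (Fin (p * N) × w) (Fin (p * N) × w) ℝ} {γ : ℝ} (hP : P.PosSemidef)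
    (hL : (-(Lmat (liftA A (p * N)) (liftB A B (p * N)) (liftC A C (p * N))
      (liftD A B C D (p * N)) P Q γ)).PosDef) :
    ∃ γ' > 0, ∃ P' : Matrix n n ℝ, P'.PosSemidef ∧
      (-(Lmat (liftA A N) (liftB A B N) (liftC A C N) (liftD A B C D N) P' 0 γ')).PosDef := by
  set A₁ := liftA A N
  set C₁ := liftC A C N
  -- The increment of `P₁` along `A₁` telescopes to the increment of `P` along `A₁ ^ p`.
  set P₁ := ∑ i ∈ Finset.range p, (A₁ ^ i)ᵀ * P * A₁ ^ i
  have hP₁ : P₁.PosSemidef := posSemidef_sum _ fun i _ => by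
    simpa [conjTranspose_eq_transpose_of_trivial] using hP.conjTranspose_mul_mul_same (A₁ ^ i)
  have hdecay (x : n → ℝ) (hx : x ≠ 0) : (A₁ ^ p *ᵥ x) ⬝ᵥ P *ᵥ (A₁ ^ p *ᵥ x) - x ⬝ᵥ P *ᵥ x
      + (liftC A C (p * N) *ᵥ x) ⬝ᵥ (liftC A C (p * N) *ᵥ x) < 0 := by
    simpa [Lform, A₁, liftA, ← pow_mul'] using Lform_lt_zero_of_posDef hL (v := 0) (.inl hx)
  have hT : (P₁ - A₁ᵀ * P₁ * A₁ - C₁ᵀ * C₁).PosDef := by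
    refine .of_dotProduct_mulVec_pos ?_ fun x hx => ?_
    · simp only [← conjTranspose_eq_transpose_of_trivial]
      exact (hP₁.1.sub (isHermitian_conjTranspose_mul_mul _ hP₁.1)).sub
        (isHermitian_conjTranspose_mul_self _)
    · rw [star_trivial, sub_mulVec, sub_mulVec, dotProduct_sub, dotProduct_sub,
        dotProduct_transpose_mul_mul_mulVec, dotProduct_transpose_mul_mulVec]
      have := dotProduct_sum_pow_mulVec_sub A₁ P p x
      have := liftC_mulVec_dotProduct_self_le_of_le A C (Nat.le_mul_of_pos_left N hp) x
      have := hdecay x hx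
      linarith
  obtain ⟨γ', hγ', hL'⟩ := exists_posDef_neg_Lmat (B := liftB A B N) (D := liftD A B C D N)
    hP₁.1 isHermitian_zero hT
  exact ⟨γ', hγ', P₁, hP₁, hL'⟩

end Lifting

theorem sInf_le_sInf_of_subset_of_nonempty {s t : Set ℝ} (ht : BddBelow t) (hst : s ⊆ t)
    (hne : t.Nonempty → s.Nonempty) : sInf t ≤ sInf s := by
  rcases s.eq_empty_or_nonempty with rfl | hs
  · rw [Set.not_nonempty_iff_eq_empty.1 fun h => Set.not_nonempty_empty (hne h)]
  · exact csInf_le_csInf ht hs hst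

theorem stmt_5_general (n nw nz : ℕ)
    (A : Matrix (Fin n) (Fin n) ℝ) (B : Matrix (Fin n) (Fin nw) ℝ)
    (C : Matrix (Fin nz) (Fin n) ℝ) (D : Matrix (Fin nz) (Fin nw) ℝ)
    (N₁ N₂ p : ℕ) (hp : 0 < p) (hN₂ : N₂ = p * N₁) :
    gammaBarPlus A B C D N₂ ≤ gammaBarPlus A B C D N₁ ∧
    gammaBarBarPlus A B C D N₂ ≤ gammaBarBarPlus A B C D N₁ := by
  subst hN₂
  constructor
  · refine sInf_le_sInf_of_subset_of_nonempty ⟨0, fun γ hγ => hγ.1.le⟩ ?_ ?_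
    · rintro γ ⟨hγ, P, Q, hP, hQ, hL⟩
      exact ⟨hγ, P, diagRepeat p Q, hP, hQ.diagRepeat, posDef_neg_Lmat_lift_mul hp hP.1 hQ.1 hL⟩
    · rintro ⟨γ, hγ, P, Q, hP, -, hL⟩
      obtain ⟨γ', hγ', P', hP', hL'⟩ := exists_posDef_neg_Lmat_of_lift_mul hp hP hL
      exact ⟨γ', hγ', P', 0, hP', ⟨isSymm_zero, fun _ _ => by simp⟩, hL'⟩
  · refine sInf_le_sInf_of_subset_of_nonempty ⟨0, fun γ hγ => hγ.1.le⟩ ?_ ?_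
    · rintro γ ⟨hγ, P, _, Q₁, Q₂, hP, rfl, hQ₁, hQ₂, hQ₂_nonneg, hL⟩
      refine ⟨hγ, P, _, diagRepeat p Q₁, diagRepeat p Q₂, hP, diagRepeat_add Q₁ Q₂,
        hQ₁.diagRepeat, hQ₂.diagRepeat, diagRepeat_nonneg hQ₂_nonneg,
        posDef_neg_Lmat_lift_mul hp hP.1 ((isHermitian_iff_isSymm.1 hQ₁.1).add hQ₂) hL⟩
    · rintro ⟨γ, hγ, P, Q, -, -, hP, -, -, -, -, hL⟩
      obtain ⟨γ', hγ', P', hP', hL'⟩ := exists_posDef_neg_Lmat_of_lift_mul hp hP hL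
      exact ⟨γ', hγ', P', 0, 0, 0, hP', (add_zero 0).symm, .zero, isSymm_zero, fun _ _ => le_rfl,
        hL'⟩

/-- the upper bounds γ̄_{N+} and γ̄̄_{N+} do not deteriorate when the
lifting order is multiplied: γ̄_{pN₁+} ≤ γ̄_{N₁+} and γ̄̄_{pN₁+} ≤ γ̄̄_{N₁+}. -/
theorem stmt_5 (n nw nz : ℕ)
    (A : Matrix (Fin n) (Fin n) ℝ) (B : Matrix (Fin n) (Fin nw) ℝ)
    (C : Matrix (Fin nz) (Fin n) ℝ) (D : Matrix (Fin nz) (Fin nw) ℝ)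
    (N₁ N₂ p : ℕ) (hN₁ : 0 < N₁) (hp : 0 < p) (hN₂ : N₂ = p * N₁) :
    gammaBarPlus A B C D N₂ ≤ gammaBarPlus A B C D N₁ ∧
    gammaBarBarPlus A B C D N₂ ≤ gammaBarBarPlus A B C D N₁ :=
  stmt_5_general n nw nz A B C D N₁ N₂ p hp hN₂

end
end

section
/- Let G be the discrete-time LTI system with matrices (A, B, C, D) where A is Schur–Cohn stable, and for N ∈ ℕ let D̂_N be the N-th order lifted feedthrough matrix. Then the sequence N ↦ ‖D̂_N‖_{2+} is monotonically non-decreasing, and lim_{N→∞} ‖D̂_N‖_{2+} = ‖G‖_{2+}. -/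
open Matrix

noncomputable section

/-! Stacking the first `N` samples of a signal into a vector of `ℝ^{N n_w}` turns the system into
the matrix `D̂_N`: by causality, `D̂_N` maps the stacked input to the stacked output. Extending a
nonnegative vector by zeros to a signal of the same norm therefore gives monotonicity in `N` and
`‖D̂_N‖_{2+} ≤ ‖G‖_{2+}`, while truncating an input signal after `N` samples bounds every output
energy by `sup_N ‖D̂_N‖_{2+}`. Schur stability keeps all these quantities finite: by Gelfand's
formula the Markov parameters `D, C B, C A B, …` are absolutely summable, and Young's convolution
inequality bounds every `‖D̂_N‖` by their sum. -/

open Finset Filter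
open scoped Matrix.Norms.L2Operator

section VecNorm

variable {ι κ : Type*} [Fintype ι] [Fintype κ]

lemma vecNorm_eq_norm (v : ι → ℝ) : vecNorm v = ‖WithLp.toLp 2 v‖ := by
  simp [vecNorm, EuclideanSpace.norm_eq]

lemma vecNorm_eq_norm_algebraMap (v : ι → ℝ) :
    vecNorm v = ‖WithLp.toLp 2 (algebraMap ℝ ℂ ∘ v)‖ := by
  simp [vecNorm, EuclideanSpace.norm_eq]

lemma vecNorm_nonneg (v : ι → ℝ) : 0 ≤ vecNorm v :=
  Real.sqrt_nonneg _

lemma sq_vecNorm (v : ι → ℝ) : vecNorm v ^ 2 = ∑ i, v i ^ 2 :=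
  Real.sq_sqrt (sum_nonneg fun _ _ => sq_nonneg _)

lemma vecNorm_smul (t : ℝ) (v : ι → ℝ) : vecNorm (t • v) = |t| * vecNorm v := by
  rw [vecNorm_eq_norm, vecNorm_eq_norm, WithLp.toLp_smul, norm_smul, Real.norm_eq_abs]

lemma vecNorm_sum_le {α : Type*} (s : Finset α) (v : α → ι → ℝ) :
    vecNorm (∑ a ∈ s, v a) ≤ ∑ a ∈ s, vecNorm (v a) := by
  simp only [vecNorm_eq_norm, WithLp.toLp_sum]
  exact norm_sum_le _ _

lemma vecNorm_mulVec_le [DecidableEq ι] (M : Matrix κ ι ℝ) (v : ι → ℝ) :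
    vecNorm (M *ᵥ v) ≤ ‖M‖ * vecNorm v := by
  rw [vecNorm_eq_norm, vecNorm_eq_norm]
  exact M.l2_opNorm_mulVec (WithLp.toLp 2 v)

lemma vecNorm_mulVec_le_norm_map_algebraMap [DecidableEq ι] (M : Matrix κ ι ℝ) (v : ι → ℝ) :
    vecNorm (M *ᵥ v) ≤ ‖M.map (algebraMap ℝ ℂ)‖ * vecNorm v := by
  have hmap : algebraMap ℝ ℂ ∘ (M *ᵥ v) = M.map (algebraMap ℝ ℂ) *ᵥ (algebraMap ℝ ℂ ∘ v) :=
    funext (RingHom.map_mulVec _ M v)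
  rw [vecNorm_eq_norm_algebraMap, vecNorm_eq_norm_algebraMap, hmap]
  exact (M.map _).l2_opNorm_mulVec (WithLp.toLp 2 _)

lemma Matrix.l2_opNorm_le_l2_opNorm_map_algebraMap [DecidableEq ι] (M : Matrix κ ι ℝ) :
    ‖M‖ ≤ ‖M.map (algebraMap ℝ ℂ)‖ := by
  rw [Matrix.l2_opNorm_def]
  refine ContinuousLinearMap.opNorm_le_bound _ (norm_nonneg _) fun x => ?_
  simpa [vecNorm_eq_norm, Matrix.toLpLin_apply] using
    vecNorm_mulVec_le_norm_map_algebraMap M x.ofLp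

end VecNorm

section MatPosNorm

variable {ι κ : Type*} [Fintype ι] [Fintype κ]

lemma matPosNorm_nonneg (M : Matrix ι κ ℝ) : 0 ≤ matPosNorm M :=
  Real.sSup_nonneg <| by rintro _ ⟨v, -, -, rfl⟩; exact vecNorm_nonneg _

lemma matPosNorm_le {M : Matrix ι κ ℝ} {c : ℝ} (hc : 0 ≤ c)
    (h : ∀ v : κ → ℝ, (∀ i, 0 ≤ v i) → vecNorm v = 1 → vecNorm (M *ᵥ v) ≤ c) :
    matPosNorm M ≤ c :=
  Real.sSup_le (by rintro _ ⟨v, hv0, hv1, rfl⟩; exact h v hv0 hv1) hc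

lemma vecNorm_mulVec_le_matPosNorm_mul [DecidableEq κ] (M : Matrix ι κ ℝ) {v : κ → ℝ}
    (hv : ∀ i, 0 ≤ v i) : vecNorm (M *ᵥ v) ≤ matPosNorm M * vecNorm v := by
  have hbdd : BddAbove {c : ℝ | ∃ u : κ → ℝ, (∀ i, 0 ≤ u i) ∧ vecNorm u = 1 ∧
      c = vecNorm (M *ᵥ u)} := by
    refine ⟨‖M‖, ?_⟩
    rintro _ ⟨u, -, hu1, rfl⟩
    simpa [hu1] using vecNorm_mulVec_le M u
  rcases (vecNorm_nonneg v).eq_or_lt with h0 | hpos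
  · have hv0 : v = 0 := by
      simpa [vecNorm_eq_norm] using h0.symm
    simp [hv0, vecNorm]
  · set u := (vecNorm v)⁻¹ • v
    have hu1 : vecNorm u = 1 := by
      rw [vecNorm_smul, abs_inv, abs_of_pos hpos, inv_mul_cancel₀ hpos.ne']
    have hu : vecNorm (M *ᵥ u) ≤ matPosNorm M :=
      le_csSup hbdd ⟨u, fun i => mul_nonneg (inv_nonneg.2 hpos.le) (hv i), hu1, rfl⟩
    have hMv : M *ᵥ v = vecNorm v • M *ᵥ u := by
      rw [Matrix.mulVec_smul, smul_smul, mul_inv_cancel₀ hpos.ne', one_smul]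
    rw [hMv, vecNorm_smul, abs_of_pos hpos, mul_comm (matPosNorm M)]
    exact mul_le_mul_of_nonneg_left hu hpos.le

end MatPosNorm

lemma summable_norm_pow_of_spectralRadius_lt_one {𝔸 : Type*} [NormedRing 𝔸]
    [NormedAlgebra ℂ 𝔸] [CompleteSpace 𝔸] {a : 𝔸} (ha : spectralRadius ℂ a < 1) :
    Summable fun k => ‖a ^ k‖ := by
  obtain ⟨r, hρr, hr1⟩ := ENNReal.lt_iff_exists_nnreal_btwn.1 ha
  refine Summable.of_norm_bounded_eventually_nat
    (summable_geometric_of_lt_one r.2 (by exact_mod_cast hr1)) ?_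
  filter_upwards [(spectrum.pow_norm_pow_one_div_tendsto_nhds_spectralRadius a).eventually_lt_const
    hρr, eventually_ge_atTop 1] with k hk hk1
  rw [ENNReal.ofReal_lt_iff_lt_toReal (by positivity) ENNReal.coe_ne_top, ENNReal.coe_toReal,
    one_div, Real.rpow_inv_lt_iff_of_pos (norm_nonneg _) r.coe_nonneg (Nat.cast_pos.2 hk1),
    Real.rpow_natCast] at hk
  rw [norm_norm]
  exact hk.le

lemma sum_sq_convolution_le {h : ℕ → ℝ} (hh : ∀ m, 0 ≤ h m) {S : ℝ}
    (hS : ∀ K, ∑ m ∈ range K, h m ≤ S) (a : ℕ → ℝ) (K : ℕ) :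
    ∑ k ∈ range K, (∑ j ∈ range (k + 1), h (k - j) * a j) ^ 2 ≤ S ^ 2 * ∑ j ∈ range K, a j ^ 2 := by
  have hS0 : 0 ≤ S := (hS 0).trans' (by simp)
  have hrow : ∀ k, (∑ j ∈ range (k + 1), h (k - j) * a j) ^ 2 ≤
      S * ∑ j ∈ range (k + 1), h (k - j) * a j ^ 2 := by
    intro k
    refine (sum_sq_le_sum_mul_sum_of_sq_le_mul (r := fun j => h (k - j) * a j)
      (f := fun j => h (k - j)) (g := fun j => h (k - j) * a j ^ 2) _ (fun j _ => hh _)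
      (fun j _ => mul_nonneg (hh _) (sq_nonneg _)) fun j _ => le_of_eq (by ring)).trans ?_
    refine mul_le_mul_of_nonneg_right ?_ (sum_nonneg fun j _ => mul_nonneg (hh _) (sq_nonneg _))
    simpa using (sum_range_reflect h (k + 1)).trans_le (hS (k + 1))
  calc ∑ k ∈ range K, (∑ j ∈ range (k + 1), h (k - j) * a j) ^ 2
      ≤ ∑ k ∈ range K, S * ∑ j ∈ range (k + 1), h (k - j) * a j ^ 2 :=
        sum_le_sum fun k _ => hrow k
    _ = S * ∑ j ∈ range K, (∑ m ∈ range (K - j), h m) * a j ^ 2 := by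
        rw [← mul_sum, sum_range_diag_flip K fun j m => h m * a j ^ 2]
        simp only [sum_mul]
    _ ≤ S * ∑ j ∈ range K, S * a j ^ 2 := by gcongr; exact hS _
    _ = S ^ 2 * ∑ j ∈ range K, a j ^ 2 := by rw [← mul_sum]; ring

section Signal

variable {ι : Type*}

def liftSignal (N : ℕ) (u : ℕ → ι → ℝ) : Fin N × ι → ℝ := fun p => u p.1 p.2

def extendSignal {N : ℕ} (v : Fin N × ι → ℝ) : ℕ → ι → ℝ :=
  fun k i => if h : k < N then v (⟨k, h⟩, i) else 0

lemma liftSignal_extendSignal {N : ℕ} (v : Fin N × ι → ℝ) :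
    liftSignal N (extendSignal v) = v := by
  ext ⟨k, i⟩
  simp [liftSignal, extendSignal]

lemma extendSignal_nonneg {N : ℕ} {v : Fin N × ι → ℝ} (hv : ∀ p, 0 ≤ v p) (k : ℕ) (i : ι) :
    0 ≤ extendSignal v k i := by
  unfold extendSignal
  split_ifs
  exacts [hv _, le_rfl]

variable [Fintype ι]

lemma sq_vecNorm_liftSignal (N : ℕ) (u : ℕ → ι → ℝ) :
    vecNorm (liftSignal N u) ^ 2 = ∑ k ∈ range N, ∑ i, u k i ^ 2 := by
  rw [sq_vecNorm, Fintype.sum_prod_type]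
  exact Fin.sum_univ_eq_sum_range (fun k => ∑ i, u k i ^ 2) N

lemma vecNorm_liftSignal_mono (u : ℕ → ι → ℝ) : Monotone fun N => vecNorm (liftSignal N u) := by
  intro N K hNK
  refine pow_le_pow_iff_left₀ (vecNorm_nonneg _) (vecNorm_nonneg _) two_ne_zero |>.1 ?_
  simp only [sq_vecNorm_liftSignal]
  exact sum_le_sum_of_subset_of_nonneg (range_mono hNK) fun _ _ _ => by positivity

lemma sum_sq_extendSignal_eq_zero {N : ℕ} (v : Fin N × ι → ℝ) {k : ℕ} (hk : N ≤ k) :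
    ∑ i, extendSignal v k i ^ 2 = 0 := by
  simp [extendSignal, hk.not_gt]

lemma vecNorm_liftSignal_extendSignal {N K : ℕ} (v : Fin N × ι → ℝ) (hNK : N ≤ K) :
    vecNorm (liftSignal K (extendSignal v)) = vecNorm v := by
  refine (pow_left_inj₀ (vecNorm_nonneg _) (vecNorm_nonneg _) two_ne_zero).1 ?_
  rw [sq_vecNorm_liftSignal, ← sum_range_add_sum_Ico _ hNK, ← sq_vecNorm_liftSignal,
    liftSignal_extendSignal, sum_eq_zero fun k hk => sum_sq_extendSignal_eq_zero v
      (mem_Ico.1 hk).1, add_zero]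

lemma summable_extendSignal {N : ℕ} (v : Fin N × ι → ℝ) :
    Summable fun k => ∑ i, extendSignal v k i ^ 2 :=
  summable_of_ne_finset_zero fun _ hk =>
    sum_sq_extendSignal_eq_zero v (not_lt.1 (mem_range.not.1 hk))

lemma sigNorm_extendSignal {N : ℕ} (v : Fin N × ι → ℝ) :
    sigNorm (extendSignal v) = vecNorm v := by
  rw [sigNorm, tsum_eq_sum (s := range N) fun _ hk =>
      sum_sq_extendSignal_eq_zero v (not_lt.1 (mem_range.not.1 hk)),
    ← sq_vecNorm_liftSignal, liftSignal_extendSignal, Real.sqrt_sq (vecNorm_nonneg _)]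

lemma vecNorm_liftSignal_le_sigNorm {u : ℕ → ι → ℝ} (hu : Summable fun k => ∑ i, u k i ^ 2)
    (N : ℕ) : vecNorm (liftSignal N u) ≤ sigNorm u := by
  rw [← Real.sqrt_sq (vecNorm_nonneg _), sq_vecNorm_liftSignal]
  exact Real.sqrt_le_sqrt (hu.sum_le_tsum _ fun _ _ => by positivity)

lemma summable_of_forall_vecNorm_liftSignal_le {u : ℕ → ι → ℝ} {c : ℝ}
    (h : ∀ N, vecNorm (liftSignal N u) ≤ c) : Summable fun k => ∑ i, u k i ^ 2 :=
  summable_of_sum_range_le (fun _ => by positivity) fun N => by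
    rw [← sq_vecNorm_liftSignal]
    exact pow_le_pow_left₀ (vecNorm_nonneg _) (h N) 2

lemma sigNorm_le_of_forall_vecNorm_liftSignal_le {u : ℕ → ι → ℝ} {c : ℝ}
    (h : ∀ N, vecNorm (liftSignal N u) ≤ c) : sigNorm u ≤ c := by
  have hc : 0 ≤ c := (vecNorm_nonneg _).trans (h 0)
  rw [sigNorm, Real.sqrt_le_left hc]
  refine Real.tsum_le_of_sum_range_le (fun _ => by positivity) fun N => ?_
  rw [← sq_vecNorm_liftSignal]
  exact pow_le_pow_left₀ (vecNorm_nonneg _) (h N) 2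

end Signal

section LTI

variable {n w z : Type*} [Fintype n] [DecidableEq n]
variable (A : Matrix n n ℝ) (B : Matrix n w ℝ) (C : Matrix z n ℝ) (D : Matrix z w ℝ)

def markovParam : ℕ → Matrix z w ℝ
  | 0 => D
  | k + 1 => C * A ^ k * B

lemma liftD_apply (N : ℕ) (r : Fin N × z) (c : Fin N × w) :
    liftD A B C D N r c =
      if (c.1 : ℕ) ≤ r.1 then markovParam A B C D (r.1 - c.1) r.2 c.2 else 0 := by
  obtain ⟨⟨k, hk⟩, i⟩ := r
  obtain ⟨⟨j, hj⟩, l⟩ := c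
  simp only [liftD, Matrix.of_apply]
  rcases lt_trichotomy j k with h | rfl | h
  · obtain ⟨m, rfl⟩ := Nat.exists_eq_add_of_lt h
    simp [h.ne', h.le, markovParam, show j + m + 1 - j = m + 1 by omega]
  · simp [markovParam]
  · simp [h.ne, h.not_ge, h.not_gt]

variable [Fintype w] [Fintype z]

lemma ltiState_eq_sum (ws : ℕ → w → ℝ) (k : ℕ) :
    ltiState A B ws k = ∑ j ∈ range k, A ^ (k - 1 - j) *ᵥ B *ᵥ ws j := by
  induction k with
  | zero => rfl
  | succ k ih =>
    rw [ltiState, ih, Matrix.mulVec_sum, sum_range_succ, Nat.add_sub_cancel, Nat.sub_self,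
      pow_zero, Matrix.one_mulVec]
    congr 1
    refine sum_congr rfl fun j hj => ?_
    rw [Matrix.mulVec_mulVec, ← pow_succ', show k - 1 - j + 1 = k - j by
      have := mem_range.1 hj; omega]

lemma ltiOutput_eq_sum (ws : ℕ → w → ℝ) (k : ℕ) :
    ltiOutput A B C D ws k = ∑ j ∈ range (k + 1), markovParam A B C D (k - j) *ᵥ ws j := by
  rw [ltiOutput, ltiState_eq_sum, Matrix.mulVec_sum, sum_range_succ, Nat.sub_self]
  congr 1
  refine sum_congr rfl fun j hj => ?_
  obtain ⟨m, hm⟩ : ∃ m, k - j = m + 1 := ⟨k - 1 - j, by have := mem_range.1 hj; omega⟩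
  rw [hm, markovParam, Matrix.mulVec_mulVec, Matrix.mulVec_mulVec,
    show k - 1 - j = m by omega]

lemma liftD_mulVec_liftSignal (N : ℕ) (ws : ℕ → w → ℝ) :
    liftD A B C D N *ᵥ liftSignal N ws = liftSignal N (ltiOutput A B C D ws) := by
  ext ⟨⟨k, hk⟩, i⟩
  simp only [Matrix.mulVec, dotProduct, Fintype.sum_prod_type, liftD_apply, liftSignal,
    ite_mul, zero_mul, ltiOutput_eq_sum, Finset.sum_apply]
  rw [Fin.sum_univ_eq_sum_range
      (fun m => ∑ l, if m ≤ k then markovParam A B C D (k - m) i l * ws m l else 0),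
    ← sum_range_add_sum_Ico _ hk, sum_eq_zero (s := Ico (k + 1) N) fun m hm => ?_, add_zero]
  · exact sum_congr rfl fun m hm => sum_congr rfl fun l _ => if_pos (mem_range_succ_iff.1 hm)
  · simp [Nat.not_le.2 (mem_Ico.1 hm).1]

end LTI
section Lifting

variable {n w z : Type*} [Fintype n] [DecidableEq n] [Fintype w] [DecidableEq w] [Fintype z]
variable (A : Matrix n n ℝ) (B : Matrix n w ℝ) (C : Matrix z n ℝ) (D : Matrix z w ℝ)

lemma summable_norm_markovParam (hA : SchurStable A) :
    Summable fun k => ‖markovParam A B C D k‖ := by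
  rw [← summable_nat_add_iff 1]
  refine Summable.of_nonneg_of_le (fun _ => norm_nonneg _) (fun k => ?_)
    ((summable_norm_pow_of_spectralRadius_lt_one hA).mul_left (‖C‖ * ‖B‖))
  have hAk : ‖A ^ k‖ ≤ ‖A.map (algebraMap ℝ ℂ) ^ k‖ :=
    Matrix.map_pow A (algebraMap ℝ ℂ) k ▸ Matrix.l2_opNorm_le_l2_opNorm_map_algebraMap (A ^ k)
  calc ‖C * A ^ k * B‖ ≤ ‖C‖ * ‖A ^ k‖ * ‖B‖ :=
        (Matrix.l2_opNorm_mul _ _).trans (by gcongr; exact Matrix.l2_opNorm_mul _ _)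
    _ ≤ ‖C‖ * ‖B‖ * ‖A.map (algebraMap ℝ ℂ) ^ k‖ := by
        rw [mul_right_comm]; gcongr

lemma vecNorm_liftSignal_ltiOutput_le (hA : SchurStable A) (ws : ℕ → w → ℝ) (N : ℕ) :
    vecNorm (liftSignal N (ltiOutput A B C D ws)) ≤
      (∑' k, ‖markovParam A B C D k‖) * vecNorm (liftSignal N ws) := by
  have hsum := summable_norm_markovParam A B C D hA
  have hpt (k : ℕ) : vecNorm (ltiOutput A B C D ws k) ≤
      ∑ j ∈ range (k + 1), ‖markovParam A B C D (k - j)‖ * vecNorm (ws j) := by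
    rw [ltiOutput_eq_sum]
    exact (vecNorm_sum_le _ _).trans (sum_le_sum fun j _ => vecNorm_mulVec_le _ _)
  refine (pow_le_pow_iff_left₀ (vecNorm_nonneg _)
    (mul_nonneg (tsum_nonneg fun _ => norm_nonneg _) (vecNorm_nonneg _)) two_ne_zero).1 ?_
  simp only [mul_pow, sq_vecNorm_liftSignal, ← sq_vecNorm]
  calc ∑ k ∈ range N, vecNorm (ltiOutput A B C D ws k) ^ 2
      ≤ ∑ k ∈ range N,
          (∑ j ∈ range (k + 1), ‖markovParam A B C D (k - j)‖ * vecNorm (ws j)) ^ 2 :=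
        sum_le_sum fun k _ => pow_le_pow_left₀ (vecNorm_nonneg _) (hpt k) 2
    _ ≤ _ := sum_sq_convolution_le (fun _ => norm_nonneg _)
        (fun K => hsum.sum_le_tsum _ fun _ _ => norm_nonneg _) _ N

lemma vecNorm_liftD_mulVec_le (hA : SchurStable A) (N : ℕ) (v : Fin N × w → ℝ) :
    vecNorm (liftD A B C D N *ᵥ v) ≤ (∑' k, ‖markovParam A B C D k‖) * vecNorm v := by
  simpa only [← liftD_mulVec_liftSignal, liftSignal_extendSignal] using
    vecNorm_liftSignal_ltiOutput_le A B C D hA (extendSignal v) N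

lemma bddAbove_range_matPosNorm_liftD (hA : SchurStable A) :
    BddAbove (Set.range fun N => matPosNorm (liftD A B C D N)) :=
  ⟨_, Set.forall_mem_range.2 fun N =>
    matPosNorm_le (tsum_nonneg fun _ => norm_nonneg _) fun v _ hv =>
      (vecNorm_liftD_mulVec_le A B C D hA N v).trans_eq (by rw [hv, mul_one])⟩

lemma matPosNorm_liftD_mono : Monotone fun N => matPosNorm (liftD A B C D N) := by
  intro N K hNK
  refine matPosNorm_le (matPosNorm_nonneg _) fun v hv0 hv1 => ?_
  set ws := extendSignal v
  calc vecNorm (liftD A B C D N *ᵥ v)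
      = vecNorm (liftSignal N (ltiOutput A B C D ws)) := by
        rw [← liftD_mulVec_liftSignal, liftSignal_extendSignal]
    _ ≤ vecNorm (liftSignal K (ltiOutput A B C D ws)) := vecNorm_liftSignal_mono _ hNK
    _ = vecNorm (liftD A B C D K *ᵥ liftSignal K ws) := by rw [liftD_mulVec_liftSignal]
    _ ≤ matPosNorm (liftD A B C D K) * vecNorm (liftSignal K ws) :=
        vecNorm_mulVec_le_matPosNorm_mul _ fun p => extendSignal_nonneg hv0 _ _
    _ = matPosNorm (liftD A B C D K) := by
        rw [vecNorm_liftSignal_extendSignal v hNK, hv1, mul_one]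

theorem posL2Gain_eq_iSup_matPosNorm_liftD (hA : SchurStable A) :
    posL2Gain A B C D = ⨆ N, matPosNorm (liftD A B C D N) := by
  have hbdd := bddAbove_range_matPosNorm_liftD A B C D hA
  have hgain : ∀ c ∈ {c : ℝ | ∃ ws : ℕ → w → ℝ, (∀ k i, 0 ≤ ws k i) ∧
      Summable (fun k => ∑ i, (ws k i) ^ 2) ∧ sigNorm ws = 1 ∧
      c = sigNorm (ltiOutput A B C D ws)}, c ≤ ⨆ N, matPosNorm (liftD A B C D N) := by
    rintro _ ⟨ws, hws0, hws, hws1, rfl⟩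
    refine sigNorm_le_of_forall_vecNorm_liftSignal_le fun N => ?_
    calc vecNorm (liftSignal N (ltiOutput A B C D ws))
        = vecNorm (liftD A B C D N *ᵥ liftSignal N ws) := by rw [liftD_mulVec_liftSignal]
      _ ≤ matPosNorm (liftD A B C D N) * vecNorm (liftSignal N ws) :=
          vecNorm_mulVec_le_matPosNorm_mul _ fun _ => hws0 _ _
      _ ≤ matPosNorm (liftD A B C D N) * 1 := by
          gcongr
          · exact matPosNorm_nonneg _
          · exact hws1 ▸ vecNorm_liftSignal_le_sigNorm hws N
      _ ≤ ⨆ N, matPosNorm (liftD A B C D N) := (mul_one _).trans_le (le_ciSup hbdd N)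
  refine le_antisymm (Real.sSup_le hgain (Real.iSup_nonneg fun _ => matPosNorm_nonneg _))
    (ciSup_le fun N => matPosNorm_le (Real.sSup_nonneg ?_) fun v hv0 hv1 => ?_)
  · rintro _ ⟨ws, -, -, -, rfl⟩
    exact Real.sqrt_nonneg _
  set ws := extendSignal v
  -- needed because `sigNorm` of a signal of infinite energy is the junk value `√0 = 0`
  have hz : Summable fun k => ∑ i, ltiOutput A B C D ws k i ^ 2 :=
    summable_of_forall_vecNorm_liftSignal_le fun K =>
      (vecNorm_liftSignal_ltiOutput_le A B C D hA ws K).trans <| mul_le_mul_of_nonneg_left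
        (vecNorm_liftSignal_le_sigNorm (summable_extendSignal v) K)
        (tsum_nonneg fun _ => norm_nonneg _)
  refine le_csSup ⟨_, hgain⟩ ⟨ws, extendSignal_nonneg hv0, summable_extendSignal v,
    (sigNorm_extendSignal v).trans hv1, rfl⟩ |>.trans' ?_
  rw [← liftSignal_extendSignal v, liftD_mulVec_liftSignal]
  exact vecNorm_liftSignal_le_sigNorm hz N

end Lifting

/-- N ↦ ‖D̂_N‖_{2+} is monotonically non-decreasing and converges to
the positive l2 induced norm of G. -/
theorem stmt_8 (n nw nz : ℕ)
    (A : Matrix (Fin n) (Fin n) ℝ) (B : Matrix (Fin n) (Fin nw) ℝ)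
    (C : Matrix (Fin nz) (Fin n) ℝ) (D : Matrix (Fin nz) (Fin nw) ℝ)
    (hA : SchurStable A) :
    Monotone (fun N : ℕ => matPosNorm (liftD A B C D N)) ∧
    Filter.Tendsto (fun N : ℕ => matPosNorm (liftD A B C D N)) Filter.atTop
      (nhds (posL2Gain A B C D)) := by
  refine ⟨matPosNorm_liftD_mono A B C D, ?_⟩
  rw [posL2Gain_eq_iSup_matPosNorm_liftD A B C D hA]
  exact tendsto_atTop_ciSup (matPosNorm_liftD_mono A B C D)
    (bddAbove_range_matPosNorm_liftD A B C D hA)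
end
end
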